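/- (The circular cylinder is of finite type in H₃) Let c > 0 and suppose t² + a(t)² = c for all t ∈ I (so I ⊆ (−√c, √c) and a(t) = ±√(c − t²)). Then the surface S₁ : r(t,s) = (t, a(t), s) satisfies Δ(r₁) = (1/c)·t, Δ(r₂) = (1/c)·a(t), and Δ(r₃) = 0 on I × ℝ; i.e. the Euclidean circular cylinder satisfies Δr_i = λ_i r_i with λ₁ = λ₂ = 1/c and λ₃ = 0. -/

import Mathlib

/-!
For a function `φ` of `t` alone the Laplacian reduces to `Δφ = -(1/W)(φ'/W)'`, and
`Δs = -(1/W)(-F/W)'`. Differentiating `t² + a² = c` gives `a a' = -t`, hence `W = √c / |a|`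
and `F = c / (2a)`. Near any point of `I` the sign `σ` of `a` is constant, so
`1/W = σ a / √c`, `a'/W = -σ t / √c` and `-F/W = -σ √c / 2`; differentiating these gives
`Δt = t / c`, `Δa = a / c` and `Δs = 0`.
-/

noncomputable section

/-- Partial derivative with respect to the first (t) variable. -/
def pdx (f : ℝ × ℝ → ℝ) : ℝ × ℝ → ℝ := fun p => fderiv ℝ f p (1, 0)

/-- Partial derivative with respect to the second (s) variable. -/
def pdy (f : ℝ × ℝ → ℝ) : ℝ × ℝ → ℝ := fun p => fderiv ℝ f p (0, 1)

/-- First fundamental form coefficient `E = 1 + a′² + ¼(a − t a′)²` of the ruled surface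
`S₁ : r(t,s) = (t, a(t), s)` in the Heisenberg group `H₃`. -/
def aE (a : ℝ → ℝ) (t : ℝ) : ℝ := 1 + deriv a t ^ 2 + (a t - t * deriv a t) ^ 2 / 4

/-- First fundamental form coefficient `F = ½(a − t a′)` of `S₁`. -/
def aF (a : ℝ → ℝ) (t : ℝ) : ℝ := (a t - t * deriv a t) / 2

/-- `W = √(EG − F²) = √(1 + a′²)` for `S₁` (here `G = 1`). -/
def aW (a : ℝ → ℝ) (t : ℝ) : ℝ := Real.sqrt (1 + deriv a t ^ 2)

/-- The Laplace–Beltrami operator of `S₁ : r(t,s) = (t, a(t), s)`, with the sign convention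
`Δφ = −(1/W)[∂_t((G φ_t − F φ_s)/W) + ∂_s((−F φ_t + E φ_s)/W)]`, `G = 1`. -/
def lap1 (a : ℝ → ℝ) (φ : ℝ × ℝ → ℝ) : ℝ × ℝ → ℝ := fun p =>
  -(1 / aW a p.1) *
    (pdx (fun q => (1 * pdx φ q - aF a q.1 * pdy φ q) / aW a q.1) p +
     pdy (fun q => (-(aF a q.1) * pdx φ q + aE a q.1 * pdy φ q) / aW a q.1) p)

open Filter Topology

section CompFst

variable {𝕜 E F G : Type*} [NontriviallyNormedField 𝕜] [NormedAddCommGroup E] [NormedSpace 𝕜 E]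
  [NormedAddCommGroup F] [NormedSpace 𝕜 F] [NormedAddCommGroup G] [NormedSpace 𝕜 G]

theorem differentiableAt_comp_fst_iff {h : E → G} {p : E × F} :
    DifferentiableAt 𝕜 (fun q : E × F => h q.1) p ↔ DifferentiableAt 𝕜 h p.1 := by
  refine ⟨fun hd => ?_, fun hd => hd.comp p differentiableAt_fst⟩
  have hsec : DifferentiableAt 𝕜 (fun x : E => (x, p.2)) p.1 :=
    differentiableAt_id.prodMk (differentiableAt_const p.2)
  exact (hd.comp p.1 hsec :)

theorem fderiv_comp_fst (h : E → G) (p : E × F) :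
    fderiv 𝕜 (fun q : E × F => h q.1) p =
      (fderiv 𝕜 h p.1).comp (ContinuousLinearMap.fst 𝕜 E F) := by
  by_cases hd : DifferentiableAt 𝕜 h p.1
  · exact (hd.hasFDerivAt.comp p hasFDerivAt_fst).fderiv
  · rw [fderiv_zero_of_not_differentiableAt hd,
      fderiv_zero_of_not_differentiableAt (mt differentiableAt_comp_fst_iff.mp hd)]
    rfl

end CompFst

theorem pdx_comp_fst (h : ℝ → ℝ) (p : ℝ × ℝ) : pdx (fun q => h q.1) p = deriv h p.1 := by
  simp [pdx, fderiv_comp_fst]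

theorem pdy_comp_fst (h : ℝ → ℝ) (p : ℝ × ℝ) : pdy (fun q => h q.1) p = 0 := by
  simp [pdy, fderiv_comp_fst]

theorem pdx_snd (p : ℝ × ℝ) : pdx Prod.snd p = 0 := by
  simp [pdx, fderiv_snd]

theorem pdy_snd (p : ℝ × ℝ) : pdy Prod.snd p = 1 := by
  simp [pdy, fderiv_snd]

theorem lap1_comp_fst (a h : ℝ → ℝ) (p : ℝ × ℝ) :
    lap1 a (fun q => h q.1) p = -(1 / aW a p.1) * deriv (fun u => deriv h u / aW a u) p.1 := by
  have hflux : (fun q : ℝ × ℝ => (1 * pdx (fun q => h q.1) q - aF a q.1 * pdy (fun q => h q.1) q)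
      / aW a q.1) = fun q => deriv h q.1 / aW a q.1 := by
    funext q
    rw [pdx_comp_fst, pdy_comp_fst, one_mul, mul_zero, sub_zero]
  have hflux' : (fun q : ℝ × ℝ => (-(aF a q.1) * pdx (fun q => h q.1) q
      + aE a q.1 * pdy (fun q => h q.1) q) / aW a q.1) =
      fun q => -aF a q.1 * deriv h q.1 / aW a q.1 := by
    funext q
    rw [pdx_comp_fst, pdy_comp_fst, mul_zero, add_zero]
  rw [lap1, hflux, hflux', pdx_comp_fst (fun u => deriv h u / aW a u),
    pdy_comp_fst (fun u => -aF a u * deriv h u / aW a u), add_zero]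

theorem lap1_snd (a : ℝ → ℝ) (p : ℝ × ℝ) :
    lap1 a Prod.snd p = -(1 / aW a p.1) * deriv (fun u => -aF a u / aW a u) p.1 := by
  have hflux : (fun q : ℝ × ℝ => (1 * pdx Prod.snd q - aF a q.1 * pdy Prod.snd q) / aW a q.1)
      = fun q => -aF a q.1 / aW a q.1 := by
    funext q
    rw [pdx_snd, pdy_snd]
    ring
  have hflux' : (fun q : ℝ × ℝ => (-(aF a q.1) * pdx Prod.snd q + aE a q.1 * pdy Prod.snd q)
      / aW a q.1) = fun q => aE a q.1 / aW a q.1 := by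
    funext q
    rw [pdx_snd, pdy_snd]
    ring
  rw [lap1, hflux, hflux', pdx_comp_fst (fun u => -aF a u / aW a u),
    pdy_comp_fst (fun u => aE a u / aW a u), add_zero]

theorem mul_deriv_eq_neg_of_sq_add_sq_eq {a : ℝ → ℝ} {c t : ℝ} (hd : DifferentiableAt ℝ a t)
    (hcyl : ∀ᶠ u in 𝓝 t, u ^ 2 + a u ^ 2 = c) : a t * deriv a t = -t := by
  have hderiv := (hasDerivAt_pow 2 t).fun_add (hd.hasDerivAt.fun_pow 2)
  have hconst : HasDerivAt (fun u => u ^ 2 + a u ^ 2) 0 t :=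
    (hasDerivAt_const t c).congr_of_eventuallyEq hcyl
  have h2 := hderiv.unique hconst
  norm_num at h2
  linarith

theorem exists_eventually_abs_eq_mul {f : ℝ → ℝ} {x : ℝ} (hf : ContinuousAt f x) (hx : f x ≠ 0) :
    ∃ σ : ℝ, σ ^ 2 = 1 ∧ ∀ᶠ u in 𝓝 x, |f u| = σ * f u := by
  rcases hx.lt_or_gt with hneg | hpos
  · refine ⟨-1, by norm_num, ?_⟩
    filter_upwards [hf.eventually (gt_mem_nhds hneg)] with u hu
    rw [abs_of_neg hu, neg_one_mul]
  · refine ⟨1, by norm_num, ?_⟩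
    filter_upwards [hf.eventually (lt_mem_nhds hpos)] with u hu
    rw [abs_of_pos hu, one_mul]

section Cylinder

variable {a : ℝ → ℝ} {c t : ℝ}

theorem ne_zero_of_sq_add_sq_eq (hc : 0 < c) (hcyl : t ^ 2 + a t ^ 2 = c)
    (hrel : a t * deriv a t = -t) : a t ≠ 0 := by
  intro h0
  rw [h0, zero_mul, zero_eq_neg] at hrel
  rw [h0, hrel] at hcyl
  norm_num at hcyl
  exact hc.ne hcyl

theorem aW_eq_of_sq_add_sq_eq (hc : 0 < c) (hcyl : t ^ 2 + a t ^ 2 = c)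
    (hrel : a t * deriv a t = -t) : aW a t = √c / |a t| := by
  have ha := ne_zero_of_sq_add_sq_eq hc hcyl hrel
  have hW : 1 + deriv a t ^ 2 = c / a t ^ 2 := by
    rw [eq_div_iff (pow_ne_zero 2 ha), ← hcyl]
    linear_combination (deriv a t * a t - t) * hrel
  rw [aW, hW, Real.sqrt_div' c (sq_nonneg _), Real.sqrt_sq_eq_abs]

theorem aF_eq_of_sq_add_sq_eq (hc : 0 < c) (hcyl : t ^ 2 + a t ^ 2 = c)
    (hrel : a t * deriv a t = -t) : aF a t = c / (2 * a t) := by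
  have ha := ne_zero_of_sq_add_sq_eq hc hcyl hrel
  rw [aF, eq_div_iff (mul_ne_zero two_ne_zero ha)]
  linear_combination hcyl - t * hrel

variable {σ : ℝ}

theorem one_div_aW_eq (hc : 0 < c) (hcyl : t ^ 2 + a t ^ 2 = c) (hrel : a t * deriv a t = -t)
    (habs : |a t| = σ * a t) : 1 / aW a t = σ / √c * a t := by
  rw [aW_eq_of_sq_add_sq_eq hc hcyl hrel, one_div_div, habs]
  ring

theorem deriv_div_aW_eq (hc : 0 < c) (hcyl : t ^ 2 + a t ^ 2 = c) (hrel : a t * deriv a t = -t)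
    (habs : |a t| = σ * a t) : deriv a t / aW a t = -(σ / √c) * t := by
  rw [div_eq_mul_one_div, one_div_aW_eq hc hcyl hrel habs]
  linear_combination σ / √c * hrel

theorem neg_aF_div_aW_eq (hc : 0 < c) (hcyl : t ^ 2 + a t ^ 2 = c) (hrel : a t * deriv a t = -t)
    (habs : |a t| = σ * a t) : -aF a t / aW a t = -(σ * √c / 2) := by
  have ha := ne_zero_of_sq_add_sq_eq hc hcyl hrel
  rw [div_eq_mul_one_div, one_div_aW_eq hc hcyl hrel habs, aF_eq_of_sq_add_sq_eq hc hcyl hrel]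
  field_simp
  rw [Real.sq_sqrt hc.le, mul_comm]

theorem lap1_fst_of_circle (hc : 0 < c)
    (hloc : ∀ᶠ u in 𝓝 t, (u ^ 2 + a u ^ 2 = c ∧ a u * deriv a u = -u) ∧ |a u| = σ * a u)
    (hσ : σ ^ 2 = 1) (hd : DifferentiableAt ℝ a t) (s : ℝ) :
    lap1 a (fun q => q.1) (t, s) = 1 / c * t := by
  obtain ⟨⟨hcyl, hrel⟩, habs⟩ := hloc.self_of_nhds
  have hflux : (fun u => deriv (fun x => x) u / aW a u) =ᶠ[𝓝 t] fun u => σ / √c * a u := by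
    filter_upwards [hloc] with u ⟨⟨hcyl, hrel⟩, habs⟩
    rw [deriv_id'', one_div_aW_eq hc hcyl hrel habs]
  refine (lap1_comp_fst a (fun u => u) (t, s)).trans ?_
  rw [hflux.deriv_eq, deriv_const_mul _ hd, one_div_aW_eq hc hcyl hrel habs]
  field_simp
  rw [hσ, Real.sq_sqrt hc.le]
  linear_combination -c * hrel

theorem lap1_comp_fst_self_of_circle (hc : 0 < c)
    (hloc : ∀ᶠ u in 𝓝 t, (u ^ 2 + a u ^ 2 = c ∧ a u * deriv a u = -u) ∧ |a u| = σ * a u)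
    (hσ : σ ^ 2 = 1) (s : ℝ) :
    lap1 a (fun q => a q.1) (t, s) = 1 / c * a t := by
  obtain ⟨⟨hcyl, hrel⟩, habs⟩ := hloc.self_of_nhds
  have hflux : (fun u => deriv a u / aW a u) =ᶠ[𝓝 t] fun u => -(σ / √c) * u :=
    hloc.mono fun u ⟨⟨hcyl, hrel⟩, habs⟩ => deriv_div_aW_eq hc hcyl hrel habs
  rw [lap1_comp_fst a a (t, s), hflux.deriv_eq, deriv_const_mul _ differentiableAt_id, deriv_id'',
    one_div_aW_eq hc hcyl hrel habs]
  field_simp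
  rw [hσ, Real.sq_sqrt hc.le]
  ring

theorem lap1_snd_of_circle (hc : 0 < c)
    (hloc : ∀ᶠ u in 𝓝 t, (u ^ 2 + a u ^ 2 = c ∧ a u * deriv a u = -u) ∧ |a u| = σ * a u)
    (s : ℝ) :
    lap1 a (fun q => q.2) (t, s) = 0 := by
  have hflux : (fun u => -aF a u / aW a u) =ᶠ[𝓝 t] fun _ => -(σ * √c / 2) :=
    hloc.mono fun u ⟨⟨hcyl, hrel⟩, habs⟩ => neg_aF_div_aW_eq hc hcyl hrel habs
  rw [lap1_snd a (t, s), hflux.deriv_eq, deriv_const, mul_zero]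

end Cylinder

theorem circular_cylinder_finite_type_general
    (I : Set ℝ) (hI : IsOpen I)
    (a : ℝ → ℝ) (ha : ContDiffOn ℝ (⊤ : ℕ∞) a I)
    (c : ℝ) (hc : 0 < c) (hcyl : ∀ t ∈ I, t ^ 2 + a t ^ 2 = c) :
    ∀ t ∈ I, ∀ s : ℝ,
      lap1 a (fun q => q.1) (t, s) = (1 / c) * t ∧
      lap1 a (fun q => a q.1) (t, s) = (1 / c) * a t ∧
      lap1 a (fun q => q.2) (t, s) = 0 := by
  have hda : DifferentiableOn ℝ a I := ha.differentiableOn (by simp)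
  have hrel : ∀ u ∈ I, a u * deriv a u = -u := fun u hu =>
    mul_deriv_eq_neg_of_sq_add_sq_eq (hda.differentiableAt (hI.mem_nhds hu))
      (eventually_of_mem (hI.mem_nhds hu) hcyl)
  intro t ht s
  have hd : DifferentiableAt ℝ a t := hda.differentiableAt (hI.mem_nhds ht)
  obtain ⟨σ, hσ, habs⟩ := exists_eventually_abs_eq_mul hd.continuousAt
    (ne_zero_of_sq_add_sq_eq hc (hcyl t ht) (hrel t ht))
  have hloc : ∀ᶠ u in 𝓝 t, (u ^ 2 + a u ^ 2 = c ∧ a u * deriv a u = -u) ∧ |a u| = σ * a u := by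
    filter_upwards [hI.mem_nhds ht, habs] with u hu habs
    exact ⟨⟨hcyl u hu, hrel u hu⟩, habs⟩
  exact ⟨lap1_fst_of_circle hc hloc hσ hd s, lap1_comp_fst_self_of_circle hc hloc hσ s,
    lap1_snd_of_circle hc hloc s⟩

/-- **The circular cylinder is of finite type in `H₃`**: if `c > 0` and `t² + a(t)² = c` on `I`
(so `a(t) = ±√(c − t²)`), then `S₁ : r(t,s) = (t, a(t), s)` satisfies `Δr₁ = (1/c)t`,
`Δr₂ = (1/c)a(t)` and `Δr₃ = 0` on `I × ℝ`, i.e. `Δr_i = λ_i r_i` with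
`λ₁ = λ₂ = 1/c`, `λ₃ = 0`. -/
theorem circular_cylinder_finite_type
    (I : Set ℝ) (hI : IsOpen I) (hIne : I.Nonempty) (hIconn : I.OrdConnected)
    (a : ℝ → ℝ) (ha : ContDiffOn ℝ (⊤ : ℕ∞) a I)
    (c : ℝ) (hc : 0 < c) (hcyl : ∀ t ∈ I, t ^ 2 + a t ^ 2 = c) :
    ∀ t ∈ I, ∀ s : ℝ,
      lap1 a (fun q => q.1) (t, s) = (1 / c) * t ∧
      lap1 a (fun q => a q.1) (t, s) = (1 / c) * a t ∧
      lap1 a (fun q => q.2) (t, s) = 0 :=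
  circular_cylinder_finite_type_general I hI a ha c hc hcyl
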